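/- arXiv:2112.07004 — 2 statements merged into one kernel-verified Lean document; each statement's English description precedes it below -/
import Mathlib

section
/- Let K be a simplicial complex on [m] that is not the full simplex Δ^{m-1}. Then the complex (R*(K), d') is acyclic, where R*(K) has ℤ-basis the monomials u_J v_I with I ∈ K a face, J ⊆ [m], J ∩ I = ∅, and d'(u_J v_I) = Σ_{j∈J} ε(j,J) u_{J\{j}} v_I. -/
/-- The sign `ε(j, J) = (-1)^{#{k ∈ J : k < j}}`. -/
def eps {m : ℕ} (j : Fin m) (J : Finset (Fin m)) : ℤ :=
  (-1) ^ (J.filter (fun k => k < j)).card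

/-- The ambient free `ℤ`-module on symbols `u_J v_I` indexed by pairs `(J, I)` of
subsets of `[m]`; the module `R^*(K)` is spanned by the pairs with `I ∈ K` and
`J ∩ I = ∅`. -/
abbrev RMod (m : ℕ) := (Finset (Fin m) × Finset (Fin m)) →₀ ℤ

/-- A basis element `u_J v_I` belongs to `R^*(K)` iff `J ∩ I = ∅` and `I` is a face. -/
def RValid {m : ℕ} (K : Finset (Finset (Fin m))) (b : Finset (Fin m) × Finset (Fin m)) :
    Prop :=
  b.1 ∩ b.2 = ∅ ∧ b.2 ∈ K

/-- The differential `d'(u_J v_I) = Σ_{j ∈ J} ε(j,J) u_{J\{j}} v_I`. -/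
noncomputable def Rd' {m : ℕ} (x : RMod m) : RMod m :=
  x.sum fun b c => ∑ j ∈ b.1, (c * eps j b.1) • Finsupp.single (b.1.erase j, b.2) 1

/-!
Read `R*(K)` as `⨁_{I ∈ K} Λ[u_j : j ∉ I] · v_I`, with `d'` the derivation of the exterior
algebra determined by `d' u_j = 1`. Since `K` is closed under subsets and misses some set, no
face is all of `[m]`, so each face `I` avoids a vertex `a = f I`. Left multiplication by `u_a`
on the `v_I`-component keeps `R*(K)` and satisfies `d' u_a + u_a d' = id`, so every cycle `x`
is `d' (u_a x)`.
-/

section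

variable {m : ℕ}

open Finsupp

theorem eps_mul_self (j : Fin m) (J : Finset (Fin m)) : eps j J * eps j J = 1 := by
  rw [eps, ← pow_add, ← two_mul, pow_mul, neg_one_sq, one_pow]

theorem eps_insert_self (a : Fin m) (J : Finset (Fin m)) : eps a (insert a J) = eps a J := by
  simp [eps, Finset.filter_insert]

theorem eps_insert_of_notMem {a : Fin m} {J : Finset (Fin m)} (ha : a ∉ J) (j : Fin m) :
    eps j (insert a J) = (if a < j then -1 else 1) * eps j J := by
  unfold eps
  rw [Finset.filter_insert]
  split_ifs with h
  · rw [Finset.card_insert_of_notMem fun hf => ha (Finset.mem_filter.mp hf).1, pow_succ, mul_comm]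
  · rw [one_mul]

/-- The sign rule behind `u_a u_j = - u_j u_a`. -/
theorem eps_anticomm {a j : Fin m} {J : Finset (Fin m)} (ha : a ∉ J) (hj : j ∈ J) :
    eps a (insert a J) * eps j (insert a J) + eps j J * eps a (insert a (J.erase j)) = 0 := by
  have hja : j ≠ a := by rintro rfl; exact ha hj
  have hJ : eps a J = (if j < a then -1 else 1) * eps a (J.erase j) := by
    conv_lhs => rw [← Finset.insert_erase hj]
    exact eps_insert_of_notMem (Finset.notMem_erase j J) a
  rw [eps_insert_self, eps_insert_self, eps_insert_of_notMem ha, hJ]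
  rcases hja.lt_or_gt with h | h
  · rw [if_pos h, if_neg h.asymm]; ring
  · rw [if_neg h.asymm, if_pos h]; ring

noncomputable def Rd'Linear : RMod m →ₗ[ℤ] RMod m :=
  linearCombination ℤ fun b => ∑ j ∈ b.1, eps j b.1 • single (b.1.erase j, b.2) 1

theorem Rd'Linear_apply (x : RMod m) : Rd'Linear x = Rd' x := by
  simp only [Rd'Linear, Rd', linearCombination_apply, Finset.smul_sum, smul_smul]

theorem Rd'Linear_single (J I : Finset (Fin m)) :
    Rd'Linear (single (J, I) 1) = ∑ j ∈ J, eps j J • single (J.erase j, I) 1 := by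
  simp [Rd'Linear]

/-- Left multiplication by the exterior generator `u_{f I}` on the `v_I`-component. -/
noncomputable def uMul (f : Finset (Fin m) → Fin m) : RMod m →ₗ[ℤ] RMod m :=
  linearCombination ℤ fun b =>
    if f b.2 ∈ b.1 then 0 else eps (f b.2) (insert (f b.2) b.1) • single (insert (f b.2) b.1, b.2) 1

theorem uMul_single (f : Finset (Fin m) → Fin m) (J I : Finset (Fin m)) :
    uMul f (single (J, I) 1) =
      if f I ∈ J then 0 else eps (f I) (insert (f I) J) • single (insert (f I) J, I) 1 := by
  simp [uMul]

theorem Rd'Linear_uMul_add_uMul_Rd'Linear_single_of_mem (f : Finset (Fin m) → Fin m)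
    {J I : Finset (Fin m)} (ha : f I ∈ J) :
    Rd'Linear (uMul f (single (J, I) 1)) + uMul f (Rd'Linear (single (J, I) 1)) =
      single (J, I) 1 := by
  rw [uMul_single, if_pos ha, map_zero, zero_add, Rd'Linear_single, map_sum,
    Finset.sum_eq_single_of_mem (f I) ha]
  · rw [map_zsmul, uMul_single, if_neg (Finset.notMem_erase _ _), Finset.insert_erase ha,
      smul_smul, eps_mul_self, one_smul]
  · intro j _ hj
    rw [map_zsmul, uMul_single, if_pos (Finset.mem_erase.mpr ⟨Ne.symm hj, ha⟩), smul_zero]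

theorem Rd'Linear_uMul_add_uMul_Rd'Linear_single_of_notMem (f : Finset (Fin m) → Fin m)
    {J I : Finset (Fin m)} (ha : f I ∉ J) :
    Rd'Linear (uMul f (single (J, I) 1)) + uMul f (Rd'Linear (single (J, I) 1)) =
      single (J, I) 1 := by
  set a := f I
  have hcancel : ∀ j ∈ J,
      (eps a (insert a J) * eps j (insert a J)) • single ((insert a J).erase j, I) (1 : ℤ) +
        eps j J • uMul f (single (J.erase j, I) 1) = 0 := by
    intro j hj
    have hja : j ≠ a := by rintro rfl; exact ha hj
    rw [uMul_single, if_neg fun h => ha (Finset.mem_of_mem_erase h), smul_smul,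
      Finset.erase_insert_of_ne hja.symm, ← add_smul, eps_anticomm ha hj, zero_smul]
  rw [uMul_single, if_neg ha, map_zsmul, Rd'Linear_single, Finset.sum_insert ha,
    Finset.erase_insert ha, smul_add, smul_smul, eps_mul_self, one_smul, Finset.smul_sum,
    Rd'Linear_single, map_sum, add_assoc, ← Finset.sum_add_distrib]
  simp only [smul_smul, map_zsmul]
  rw [Finset.sum_eq_zero hcancel, add_zero]

theorem Rd'Linear_comp_uMul_add_uMul_comp_Rd'Linear (f : Finset (Fin m) → Fin m) :
    Rd'Linear ∘ₗ uMul f + uMul f ∘ₗ Rd'Linear = LinearMap.id := by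
  refine lhom_ext' fun ⟨J, I⟩ => LinearMap.ext_ring ?_
  simp only [LinearMap.add_apply, LinearMap.comp_apply, lsingle_apply, LinearMap.id_apply]
  by_cases ha : f I ∈ J
  · exact Rd'Linear_uMul_add_uMul_Rd'Linear_single_of_mem f ha
  · exact Rd'Linear_uMul_add_uMul_Rd'Linear_single_of_notMem f ha

theorem map_uMul_supported_le {K : Finset (Finset (Fin m))} {f : Finset (Fin m) → Fin m}
    (hf : ∀ I ∈ K, f I ∉ I) :
    (supported ℤ ℤ {b | RValid K b}).map (uMul f) ≤ supported ℤ ℤ {b | RValid K b} := by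
  rw [supported_eq_span_single, Submodule.map_span_le, ← supported_eq_span_single]
  rintro _ ⟨⟨J, I⟩, ⟨hJI, hI⟩, rfl⟩
  rw [uMul_single]
  split_ifs
  · exact zero_mem _
  · refine Submodule.smul_mem _ _ (single_mem_supported ℤ _ ⟨?_, hI⟩)
    rw [Finset.insert_inter_of_notMem (hf I hI), hJI]

end

/-- If the simplicial complex `K` on `[m]` is not the full simplex `Δ^{m-1}`, then
the complex `(R^*(K), d')` is acyclic: every `d'`-cycle in `R^*(K)` is the `d'`-image
of an element of `R^*(K)`. -/
theorem Rd'_acyclic {m : ℕ} (K : Finset (Finset (Fin m)))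
    (hempty : ∅ ∈ K) (hdown : ∀ σ ∈ K, ∀ τ ⊆ σ, τ ∈ K)
    (hnotsimplex : ∃ S : Finset (Fin m), S ∉ K) :
    ∀ x : RMod m, (∀ b ∈ x.support, RValid K b) → Rd' x = 0 →
      ∃ y : RMod m, (∀ b ∈ y.support, RValid K b) ∧ Rd' y = x := by
  obtain ⟨S, hS⟩ := hnotsimplex
  have hfree : ∀ I ∈ K, ∃ a, a ∉ I := fun I hI => by
    by_contra! hall
    exact hS (hdown I hI S fun a _ => hall a)
  have : Nonempty (Fin m) := by
    obtain ⟨a, -⟩ := hfree ∅ hempty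
    exact ⟨a⟩
  let f : Finset (Fin m) → Fin m := fun I => Classical.epsilon (· ∉ I)
  have hf : ∀ I ∈ K, f I ∉ I := fun I hI => Classical.epsilon_spec (hfree I hI)
  intro x hx hcycle
  refine ⟨uMul f x, map_uMul_supported_le hf (Submodule.mem_map_of_mem hx), ?_⟩
  have hhomotopy := LinearMap.congr_fun (Rd'Linear_comp_uMul_add_uMul_comp_Rd'Linear f) x
  rwa [LinearMap.add_apply, LinearMap.comp_apply, LinearMap.comp_apply, Rd'Linear_apply,
    Rd'Linear_apply, hcycle, map_zero, add_zero] at hhomotopy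
end

section
/- Let A = ⊕_{i=0}^{d} A^i be a graded commutative Poincaré duality algebra over a field F, and let δ be a derivation of degree -1 on A with δ∘δ = 0 such that [A^d] survives in cohomology (δ(A^d)=0 and A^d not in the image of δ restricted to the top). Then the cohomology H(A, δ) is again a Poincaré duality algebra of dimension d. -/
open Module

private lemma aux_bij {F V W : Type*} [Field F] [AddCommGroup V] [Module F V]
    [AddCommGroup W] [Module F W] [FiniteDimensional F V] [FiniteDimensional F W]
    (P : V →ₗ[F] Module.Dual F W)
    (h1 : ∀ v, (∀ w, P v w = 0) → v = 0)
    (h2 : ∀ w, (∀ v, P v w = 0) → w = 0) :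
    Function.Bijective P := by
  have hinj : Function.Injective P := by
    rw [← LinearMap.ker_eq_bot]
    refine (Submodule.eq_bot_iff _).2 fun v hv => h1 v fun w => ?_
    rw [LinearMap.mem_ker.mp hv]; rfl
  have hinj' : Function.Injective P.flip := by
    rw [← LinearMap.ker_eq_bot]
    refine (Submodule.eq_bot_iff _).2 fun w hw => h2 w fun v => ?_
    have := LinearMap.mem_ker.mp hw
    exact congrFun (congrArg DFunLike.coe this) v
  have e1 : finrank F V ≤ finrank F W := by
    have := LinearMap.finrank_le_finrank_of_injective hinj
    rwa [Subspace.dual_finrank_eq] at this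
  have e2 : finrank F W ≤ finrank F V := by
    have := LinearMap.finrank_le_finrank_of_injective hinj'
    rwa [Subspace.dual_finrank_eq] at this
  have hdim : finrank F V = finrank F (Module.Dual F W) := by
    rw [Subspace.dual_finrank_eq]; omega
  exact ⟨hinj, (LinearMap.injective_iff_surjective_of_finrank_eq_finrank hdim).mp hinj⟩

private lemma aux_neg_one_pow_smul {F B : Type*} [Field F] [Ring B] [Algebra F B]
    (k : ℕ) (x : B) : ((-1 : F) ^ k) • x = (-1 : B) ^ k * x := by
  rcases Nat.even_or_odd k with h | h
  · rw [h.neg_one_pow, h.neg_one_pow, one_smul, one_mul]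
  · rw [h.neg_one_pow, h.neg_one_pow, neg_smul, one_smul, neg_mul, one_mul]

private noncomputable def auxPairing {F B : Type*} [Field F] [Ring B] [Algebra F B]
    (𝒜 : ℕ → Submodule F B) [SetLike.GradedMonoid 𝒜] (d : ℕ)
    (φ : ↥(𝒜 d) →ₗ[F] F) (k l : ℕ) (hkl : k + l = d) :
    ↥(𝒜 k) →ₗ[F] Module.Dual F ↥(𝒜 l) :=
  LinearMap.mk₂ F (fun a b => φ ⟨(a : B) * b, hkl ▸ SetLike.mul_mem_graded a.2 b.2⟩)
    (fun a a' b => by rw [← map_add]; exact congrArg φ (Subtype.ext (by simp [add_mul])))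
    (fun c a b => by rw [← map_smul]; exact congrArg φ (Subtype.ext (by simp [smul_mul_assoc])))
    (fun a b b' => by rw [← map_add]; exact congrArg φ (Subtype.ext (by simp [mul_add])))
    (fun c a b => by rw [← map_smul]; exact congrArg φ (Subtype.ext (by simp [mul_smul_comm])))

private lemma auxPairing_apply {F B : Type*} [Field F] [Ring B] [Algebra F B]
    (𝒜 : ℕ → Submodule F B) [SetLike.GradedMonoid 𝒜] (d : ℕ)
    (φ : ↥(𝒜 d) →ₗ[F] F) (k l : ℕ) (hkl : k + l = d) (a : ↥(𝒜 k)) (b : ↥(𝒜 l)) :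
    auxPairing 𝒜 d φ k l hkl a b
      = φ ⟨(a : B) * b, hkl ▸ SetLike.mul_mem_graded a.2 b.2⟩ := rfl

private lemma auxPairing_eq_zero {F B : Type*} [Field F] [Ring B] [Algebra F B]
    (𝒜 : ℕ → Submodule F B) [SetLike.GradedMonoid 𝒜] (d : ℕ)
    (φ : ↥(𝒜 d) →ₗ[F] F) (k l : ℕ) (hkl : k + l = d) (a : ↥(𝒜 k)) (b : ↥(𝒜 l))
    (hab : (a : B) * b = 0) : auxPairing 𝒜 d φ k l hkl a b = 0 := by
  rw [auxPairing_apply]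
  have h0 : (⟨(a : B) * b, hkl ▸ SetLike.mul_mem_graded a.2 b.2⟩ : ↥(𝒜 d)) = 0 :=
    Subtype.ext hab
  rw [h0, map_zero]

/-- Let `A = ⊕_{i=0}^d A^i` (realized as a graded algebra `𝒜` on a ring `B` over a
field `F`) be a graded commutative connected Poincaré duality algebra of dimension `d`
with finite-dimensional graded components, and let `δ = D` be a degree `-1` derivation
with `D ∘ D = 0` such that the top class survives in cohomology (`D(A^d) = 0` and `A^d`
meets the image of `D` from degree `d+1` trivially).  Then the cohomology `H(A, D)` is
again a Poincaré duality algebra of dimension `d`: its top degree `H^d` is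
one-dimensional (spanned by a class `ω`), and the induced pairing
`H^i ⊗ H^{d-i} → H^d` is nondegenerate for all `i ≤ d`. -/
theorem cohomology_of_PD_dga_is_PD
    (F : Type*) [Field F] (B : Type*) [Ring B] [Algebra F B]
    (𝒜 : ℕ → Submodule F B) [GradedAlgebra 𝒜] (d : ℕ)
    -- finite-dimensional graded components, vanishing above `d`:
    (hfin : ∀ i, FiniteDimensional F (𝒜 i))
    (hbound : ∀ i, d < i → 𝒜 i = ⊥)
    -- connected: `A^0 = F·1`:
    (hconn : Module.finrank F (𝒜 0) = 1)
    -- graded commutative: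
    (hcomm : ∀ (i j : ℕ) (a b : B), a ∈ 𝒜 i → b ∈ 𝒜 j →
      a * b = ((-1 : B) ^ (i * j)) * (b * a))
    -- Poincaré duality: `A^d ≅ F` and the pairing `A^i ⊗ A^{d-i} → A^d` is perfect:
    (htop : Module.finrank F (𝒜 d) = 1)
    (hPD : ∀ i, i ≤ d → ∀ a ∈ 𝒜 i, (∀ b ∈ 𝒜 (d - i), a * b = 0) → a = 0)
    -- the differential: an `F`-linear derivation of degree `-1` squaring to zero:
    (D : B →ₗ[F] B)
    (hDdeg : ∀ (i : ℕ) (a : B), a ∈ 𝒜 (i + 1) → D a ∈ 𝒜 i)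
    (hD0 : ∀ a ∈ 𝒜 0, D a = 0)
    (hD2 : ∀ a : B, D (D a) = 0)
    (hLeibniz : ∀ (i : ℕ) (a b : B), a ∈ 𝒜 i →
      D (a * b) = D a * b + ((-1 : B) ^ i) * (a * D b))
    -- the top class survives in cohomology:
    (hDtop : ∀ a ∈ 𝒜 d, D a = 0)
    (hsurvive : ∀ a ∈ 𝒜 d, (∃ b ∈ 𝒜 (d + 1), D b = a) → a = 0) :
    -- `H^d(A, D)` is one-dimensional, spanned by a surviving top class `ω` …
    (∃ ω ∈ 𝒜 d, D ω = 0 ∧ (¬ ∃ b ∈ 𝒜 (d + 1), D b = ω) ∧ ω ≠ 0 ∧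
      ∀ a ∈ 𝒜 d, D a = 0 → ∃ (t : F) (c : B), c ∈ 𝒜 (d + 1) ∧ a = t • ω + D c) ∧
    -- … and the induced pairing on cohomology is nondegenerate in all degrees:
    (∀ i, i ≤ d → ∀ a ∈ 𝒜 i, D a = 0 →
      (∀ b ∈ 𝒜 (d - i), D b = 0 → ∃ c ∈ 𝒜 (d + 1), a * b = D c) →
      ∃ c ∈ 𝒜 (i + 1), a = D c) := by
  have hA1 : 𝒜 (d + 1) = ⊥ := hbound _ (Nat.lt_succ_self d)
  haveI : FiniteDimensional F ↥(𝒜 d) := hfin d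
  obtain ⟨e⟩ := FiniteDimensional.nonempty_linearEquiv_of_finrank_eq
    (R := F) (M := ↥(𝒜 d)) (M' := F) (htop.trans (Module.finrank_self F).symm)
  set φ : ↥(𝒜 d) →ₗ[F] F := e.toLinearMap with hφdef
  have hφinj : Function.Injective φ := e.injective
  constructor
  · -- the top cohomology
    obtain ⟨v, hv0, hv⟩ := finrank_eq_one_iff'.mp htop
    have hvB : (v : B) ≠ 0 := fun h => hv0 (Subtype.ext h)
    refine ⟨(v : B), v.2, hDtop _ v.2, ?_, hvB, ?_⟩
    · rintro ⟨b, hb, hDb⟩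
      rw [hA1, Submodule.mem_bot] at hb
      subst hb
      rw [map_zero] at hDb
      exact hvB hDb.symm
    · intro a ha _
      obtain ⟨t, ht⟩ := hv ⟨a, ha⟩
      refine ⟨t, 0, (𝒜 (d + 1)).zero_mem, ?_⟩
      rw [map_zero, add_zero]
      exact (congrArg Subtype.val ht).symm
  · -- the pairing on cohomology
    intro i hi a ha hDa hann
    have hann' : ∀ b ∈ 𝒜 (d - i), D b = 0 → a * b = 0 := by
      intro b hb hDb
      obtain ⟨c, hc, hcd⟩ := hann b hb hDb
      rw [hA1, Submodule.mem_bot] at hc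
      rw [hcd, hc, map_zero]
    rcases eq_or_lt_of_le hi with rfl | hlt
    · -- top degree: a pairs to zero with 1 ∈ A⁰, hence a = 0
      refine ⟨0, (𝒜 (i + 1)).zero_mem, ?_⟩
      rw [map_zero]
      have h1 : (1 : B) ∈ 𝒜 (i - i) := by
        simpa [Nat.sub_self] using (SetLike.one_mem_graded 𝒜 : (1 : B) ∈ 𝒜 0)
      have h1' : (1 : B) ∈ 𝒜 0 := by simpa [Nat.sub_self] using h1
      have := hann' 1 h1 (hD0 1 h1')
      rwa [mul_one] at this
    · -- main case i < d
      set j := d - i with hjdef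
      have hij : i + j = d := by omega
      have hij' : (i + 1) + (j - 1) = d := by omega
      have hj1 : j - 1 + 1 = j := by omega
      haveI := hfin i; haveI := hfin j; haveI := hfin (i + 1); haveI := hfin (j - 1)
      -- nondegeneracy of all pairings
      have hbij : ∀ k l (hkl : k + l = d),
          Function.Bijective (auxPairing 𝒜 d φ k l hkl) := by
        intro k l hkl
        haveI := hfin k; haveI := hfin l
        apply aux_bij
        · intro v hv
          refine Subtype.ext (hPD k (by omega) v v.2 fun b hb => ?_)
          have hbl : b ∈ 𝒜 l := by rwa [show d - k = l by omega] at hb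
          have h2 := hv ⟨b, hbl⟩
          rw [auxPairing_apply] at h2
          have h0 := hφinj (h2.trans (map_zero φ).symm)
          exact congrArg Subtype.val h0
        · intro w hw
          refine Subtype.ext (hPD l (by omega) w w.2 fun b hb => ?_)
          have hbk : b ∈ 𝒜 k := by rwa [show d - l = k by omega] at hb
          have h2 := hw ⟨b, hbk⟩
          rw [auxPairing_apply] at h2
          have h0 : b * (w : B) = 0 :=
            congrArg Subtype.val (hφinj (h2.trans (map_zero φ).symm))
          rw [hcomm l k _ _ w.2 hbk, h0, mul_zero]
      -- restricted differentials
      have hd1mem : ∀ x ∈ 𝒜 (i + 1), D x ∈ 𝒜 i := fun x hx => hDdeg i x hx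
      have hd2mem : ∀ x ∈ 𝒜 j, D x ∈ 𝒜 (j - 1) := fun x hx =>
        hDdeg (j - 1) x (hj1.symm ▸ hx)
      set ε : F := -(-1 : F) ^ (i + 1) with hεdef
      have hε : ε ≠ 0 := neg_ne_zero.2 (pow_ne_zero _ (neg_ne_zero.2 one_ne_zero))
      -- adjointness of D with itself under the pairing
      have hadj : ∀ (u : ↥(𝒜 (i + 1))) (w : ↥(𝒜 j)),
          auxPairing 𝒜 d φ i j hij (D.restrict hd1mem u) w
            = ε • auxPairing 𝒜 d φ (i + 1) (j - 1) hij' u (D.restrict hd2mem w) := by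
        intro u w
        rw [auxPairing_apply, auxPairing_apply, ← map_smul]
        refine congrArg φ (Subtype.ext ?_)
        have huw : (u : B) * w = 0 := by
          have hm := SetLike.mul_mem_graded u.2 w.2
          rw [show (i + 1) + j = d + 1 by omega, hA1] at hm
          exact (Submodule.mem_bot F).mp hm
        have hL := hLeibniz (i + 1) (u : B) (w : B) u.2
        rw [huw, map_zero] at hL
        have key : D (u : B) * w = -((-1 : B) ^ (i + 1) * ((u : B) * D w)) :=
          eq_neg_of_add_eq_zero_left hL.symm
        show D (u : B) * w = ε • ((u : B) * D w)
        rw [hεdef, neg_smul, aux_neg_one_pow_smul]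
        exact key
      -- a annihilates the kernel of d₂, hence lies in the image of (dual of d₂)
      have hmem : auxPairing 𝒜 d φ i j hij ⟨a, ha⟩
          ∈ (LinearMap.ker (D.restrict hd2mem)).dualAnnihilator := by
        rw [Submodule.mem_dualAnnihilator]
        intro w hw
        have hw' : D (w : B) = 0 := by
          have h := LinearMap.mem_ker.mp hw
          have h2 := congrArg Subtype.val h
          rwa [LinearMap.restrict_coe_apply] at h2
        exact auxPairing_eq_zero 𝒜 d φ i j hij ⟨a, ha⟩ w (hann' w w.2 hw')
      rw [← LinearMap.range_dualMap_eq_dualAnnihilator_ker] at hmem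
      obtain ⟨ψ, hψ⟩ := hmem
      obtain ⟨u', hu'⟩ := (hbij (i + 1) (j - 1) hij').2 ψ
      have hPd1 : auxPairing 𝒜 d φ i j hij (D.restrict hd1mem u')
          = ε • auxPairing 𝒜 d φ i j hij ⟨a, ha⟩ := by
        ext w
        rw [LinearMap.smul_apply, hadj u' w, hu', ← hψ]
        rfl
      refine ⟨((ε⁻¹ • u' : ↥(𝒜 (i + 1))) : B), (ε⁻¹ • u').2, ?_⟩
      have hfinal : D.restrict hd1mem (ε⁻¹ • u') = ⟨a, ha⟩ := by
        apply (hbij i j hij).1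
        rw [map_smul, map_smul, hPd1, smul_smul, inv_mul_cancel₀ hε, one_smul]
      have h := congrArg Subtype.val hfinal
      rw [LinearMap.restrict_coe_apply] at h
      exact h.symm
end
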